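/- For every integer $n \ge 2$ and all real $z$, $\frac{d}{dz}\big[(1-z^2)\,\tilde P_n(z)\big] = (1-z^2)\,P_n'(z)$. (Equivalently, any antiderivative $F$ of $\tilde P_n$ satisfies the Legendre-operator equation $\partial_z\big((1-z^2)\partial_z F\big) = -(z^2-1)P_n'(z)$, which is the defining property of $\tilde P_n$ used in the paper.) -/

import Mathlib

/-- Legendre polynomials via Rodrigues' formula. -/
noncomputable def legendreP (n : ℕ) (z : ℝ) : ℝ :=
  (1 / (2 ^ n * (Nat.factorial n) : ℝ)) * iteratedDeriv n (fun x : ℝ => (x ^ 2 - 1) ^ n) z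

/-- `P̃_n(z) = (1/(n+2)) (n P_n(z) - (2/(n-1)) P_{n-1}'(z))` for `n ≥ 2`. -/
noncomputable def tildeP (n : ℕ) (z : ℝ) : ℝ :=
  (1 / ((n : ℝ) + 2)) *
    ((n : ℝ) * legendreP n z - (2 / ((n : ℝ) - 1)) * deriv (legendreP (n - 1)) z)

/-! Write `u = (z² - 1)ⁿ⁺¹`, so that `u' = 2(n+1) z (z² - 1)ⁿ` and
`z u' = 2(n+1) ((z² - 1)ⁿ⁺¹ + (z² - 1)ⁿ)`. Differentiating both `n + 1` times by Leibniz' rule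
and normalising by Rodrigues' constants gives `P'ₙ₊₁ = z P'ₙ + (n+1) Pₙ` and
`z P'ₙ₊₁ = (n+1) Pₙ₊₁ + P'ₙ`. Eliminating `P'ₙ` yields `(z² - 1) P'ₙ₊₁ = (n+1) (z Pₙ₊₁ - Pₙ)`,
and differentiating that yields Legendre's equation `((z² - 1) P'ₙ)' = n(n+1) Pₙ`.

For `n ≥ 2`, Legendre's equation for `Pₙ₋₁` turns `((1 - z²) P̃ₙ)'` into
`n/(n+2) · ((1 - z²) P'ₙ - 2 (z Pₙ - Pₙ₋₁))`, and the first identity replaces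
`2 (z Pₙ - Pₙ₋₁)` by `(2/n) (z² - 1) P'ₙ`, leaving `(1 - z²) P'ₙ`. All of this is an identity
of polynomials. -/

open Polynomial Nat

namespace Polynomial

theorem iteratedDeriv_eval {𝕜 : Type*} [NontriviallyNormedField 𝕜] (p : 𝕜[X]) (n : ℕ) :
    iteratedDeriv n (fun x => p.eval x) = fun x => (derivative^[n] p).eval x := by
  induction n with
  | zero => simp
  | succ n ih =>
    ext x
    rw [iteratedDeriv_succ, ih, Polynomial.deriv, Function.iterate_succ_apply']

variable {K : Type*} [Field K]

theorem derivative_X_sq_sub_one_pow_succ (n : ℕ) :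
    derivative (((X : K[X]) ^ 2 - 1) ^ (n + 1)) =
      ((2 * (n + 1) : ℕ) : K[X]) * ((X ^ 2 - 1) ^ n * X) := by
  rw [derivative_pow, derivative_sub, derivative_X_sq, derivative_one, add_tsub_cancel_right,
    map_natCast, C_ofNat]
  push_cast
  ring

theorem iterate_derivative_X_sq_sub_one_pow_succ (n : ℕ) :
    derivative^[n + 2] (((X : K[X]) ^ 2 - 1) ^ (n + 1)) =
      ((2 * (n + 1) : ℕ) : K[X]) * (derivative^[n + 1] ((X ^ 2 - 1) ^ n) * X
        + ((n + 1 : ℕ) : K[X]) * derivative^[n] ((X ^ 2 - 1) ^ n)) := by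
  rw [Function.iterate_succ_apply, derivative_X_sq_sub_one_pow_succ,
    iterate_derivative_natCast_mul, iterate_derivative_mul_X, nsmul_eq_mul]
  rfl

theorem iterate_derivative_X_sq_sub_one_pow_succ_mul_X (n : ℕ) :
    derivative^[n + 2] (((X : K[X]) ^ 2 - 1) ^ (n + 1)) * X =
      ((2 * (n + 1) : ℕ) : K[X]) * derivative^[n + 1] ((X ^ 2 - 1) ^ n)
        + ((n + 1 : ℕ) : K[X]) * derivative^[n + 1] ((X ^ 2 - 1) ^ (n + 1)) := by
  have h : derivative (((X : K[X]) ^ 2 - 1) ^ (n + 1)) * X =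
      ((2 * (n + 1) : ℕ) : K[X]) * ((X ^ 2 - 1) ^ n + (X ^ 2 - 1) ^ (n + 1)) := by
    rw [derivative_X_sq_sub_one_pow_succ]; ring
  have hD := congrArg (derivative^[n + 1]) h
  rw [iterate_derivative_derivative_mul_X, iterate_derivative_natCast_mul, iterate_map_add,
    nsmul_eq_mul] at hD
  push_cast at hD ⊢
  linear_combination hD

variable (K) in
noncomputable def legendre (n : ℕ) : K[X] :=
  C (1 / (2 ^ n * n ! : K)) * derivative^[n] ((X ^ 2 - 1) ^ n)

theorem derivative_legendre (n : ℕ) :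
    derivative (legendre K n) =
      C (1 / (2 ^ n * n ! : K)) * derivative^[n + 1] ((X ^ 2 - 1) ^ n) := by
  rw [legendre, derivative_C_mul, Function.iterate_succ_apply']

variable [CharZero K]

theorem C_one_div_two_pow_mul_factorial (n : ℕ) :
    C (1 / (2 ^ n * n ! : K)) = 2 * ((n : K[X]) + 1) * C (1 / (2 ^ (n + 1) * (n + 1)! : K)) := by
  rw [← map_natCast C n, ← map_one C, ← map_ofNat C 2, ← map_add, ← map_mul, ← map_mul,
    factorial_succ, pow_succ]
  congr 1
  push_cast
  field_simp

theorem derivative_legendre_succ (n : ℕ) :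
    derivative (legendre K (n + 1)) =
      X * derivative (legendre K n) + ((n : K[X]) + 1) * legendre K n := by
  rw [derivative_legendre, derivative_legendre, legendre, iterate_derivative_X_sq_sub_one_pow_succ,
    C_one_div_two_pow_mul_factorial n]
  push_cast
  ring

theorem X_mul_derivative_legendre_succ (n : ℕ) :
    X * derivative (legendre K (n + 1)) =
      ((n : K[X]) + 1) * legendre K (n + 1) + derivative (legendre K n) := by
  rw [derivative_legendre, derivative_legendre, legendre, mul_left_comm, mul_comm X,
    iterate_derivative_X_sq_sub_one_pow_succ_mul_X, C_one_div_two_pow_mul_factorial n]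
  push_cast
  ring

theorem X_sq_sub_one_mul_derivative_legendre_succ (n : ℕ) :
    (X ^ 2 - 1) * derivative (legendre K (n + 1)) =
      ((n : K[X]) + 1) * (X * legendre K (n + 1) - legendre K n) := by
  linear_combination
    X * X_mul_derivative_legendre_succ (K := K) n - derivative_legendre_succ (K := K) n

theorem derivative_X_sq_sub_one_mul_derivative_legendre (n : ℕ) :
    derivative ((X ^ 2 - 1) * derivative (legendre K n)) =
      (n : K[X]) * ((n : K[X]) + 1) * legendre K n := by
  cases n with
  | zero => simp [legendre]
  | succ n =>
    rw [X_sq_sub_one_mul_derivative_legendre_succ]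
    simp only [derivative_mul, derivative_sub, derivative_natCast, derivative_add, derivative_one,
      derivative_X]
    push_cast
    linear_combination ((n : K[X]) + 1) * X_mul_derivative_legendre_succ (K := K) n

variable (K) in
noncomputable def tildeLegendre (n : ℕ) : K[X] :=
  C (1 / ((n : K) + 2)) *
    (C (n : K) * legendre K n - C (2 / ((n : K) - 1)) * derivative (legendre K (n - 1)))

theorem derivative_one_sub_X_sq_mul_tildeLegendre {n : ℕ} (hn : 2 ≤ n) :
    derivative ((1 - X ^ 2) * tildeLegendre K n) = (1 - X ^ 2) * derivative (legendre K n) := by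
  obtain ⟨m, rfl⟩ : ∃ m, n = m + 2 := ⟨n - 2, by omega⟩
  have ha : C (1 / ((m : K) + 4)) * ((m : K[X]) + 4) = 1 := by
    rw [← map_natCast C m, ← map_ofNat C 4, ← map_add, ← C_mul,
      one_div_mul_cancel (by exact_mod_cast (m + 3).succ_ne_zero), C_1]
  have hc : C (2 / ((m : K) + 1)) * ((m : K[X]) + 1) = 2 := by
    rw [← map_natCast C m, ← map_one C, ← map_add, ← C_mul,
      div_mul_cancel₀ _ (by exact_mod_cast m.succ_ne_zero), map_ofNat]
  have hode := derivative_X_sq_sub_one_mul_derivative_legendre (K := K) (m + 1)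
  have hrec := X_sq_sub_one_mul_derivative_legendre_succ (K := K) (m + 1)
  rw [tildeLegendre, show m + 2 - 1 = m + 1 from rfl]
  simp only [derivative_mul, derivative_sub, derivative_one, derivative_X_sq, derivative_C,
    C_ofNat] at hode ⊢
  push_cast at hode hrec ⊢
  rw [show ((m : K) + 2 - 1) = m + 1 by ring, show (m : K) + 2 + 2 = m + 4 by ring]
  simp only [map_add, map_natCast, C_ofNat]
  rw [show m + 1 + 1 = m + 2 from rfl] at hrec
  set A := C (1 / ((m : K) + 4))
  set L₁ := legendre K (m + 1)
  set L₂ := legendre K (m + 2)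
  linear_combination (A * C (2 / ((m : K) + 1))) * hode + (A * (m + 2) * L₁) * hc
    - (A * (m + 2) - 1) * hrec - (m + 2) * (X * L₂ - L₁) * ha

end Polynomial

theorem legendreP_eq_eval (n : ℕ) : legendreP n = fun z => (legendre ℝ n).eval z := by
  ext z
  have h : (fun x : ℝ => (x ^ 2 - 1) ^ n) = fun x => ((X ^ 2 - 1) ^ n : ℝ[X]).eval x := by simp
  simp [legendreP, legendre, h, iteratedDeriv_eval]

theorem tildeP_eq_eval (n : ℕ) : tildeP n = fun z => (tildeLegendre ℝ n).eval z := by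
  ext z
  simp [tildeP, tildeLegendre, legendreP_eq_eval, Polynomial.deriv]

/-- For `n ≥ 2` and all real `z`, `d/dz [(1-z²) P̃_n(z)] = (1-z²) P_n'(z)`,
i.e. `P̃_n` solves the Legendre-operator equation used to define it. -/
theorem deriv_one_sub_sq_mul_tildeP (n : ℕ) (hn : 2 ≤ n) (z : ℝ) :
    deriv (fun t : ℝ => (1 - t ^ 2) * tildeP n t) z =
      (1 - z ^ 2) * deriv (legendreP n) z := by
  have h : (fun t : ℝ => (1 - t ^ 2) * tildeP n t) =
      fun t => ((1 - X ^ 2) * tildeLegendre ℝ n).eval t := by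
    simp [tildeP_eq_eval]
  rw [h, Polynomial.deriv, derivative_one_sub_X_sq_mul_tildeLegendre hn, legendreP_eq_eval,
    Polynomial.deriv]
  simp
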